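/- The relations ∂W'/∂r_{i_u,t} (respectively ∂W'/∂r_{i_u,t}^{−1}, when relevant) lie in the two-sided ideal of ℂQ' generated by the relations ∂W'/∂a for the generating arrows a ∈ Q'₁; i.e. each derivative of W' with respect to an isomorphism arrow is expressible as a sum of elements p·(∂W'/∂a)·q with p, q ∈ ℂQ' and a generating. -/

import Mathlib

noncomputable section
open scoped Classical

structure Quiv : Type 1 where
  V : Type
  A : Type
  [finV : Fintype V]
  [finA : Fintype A]
  s : A → V
  t : A → V

attribute [instance] Quiv.finV Quiv.finA

namespace Quiv

variable (k : Type) [CommRing k] (Q : Quiv)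

inductive PathRel : FreeAlgebra k (Q.V ⊕ Q.A) → FreeAlgebra k (Q.V ⊕ Q.A) → Prop
  | vertex_mul (i j : Q.V) : PathRel
      (FreeAlgebra.ι k (Sum.inl i) * FreeAlgebra.ι k (Sum.inl j))
      (if i = j then FreeAlgebra.ι k (Sum.inl i) else 0)
  | vertex_sum : PathRel (∑ i : Q.V, FreeAlgebra.ι k (Sum.inl i)) 1
  | target_mul (a : Q.A) : PathRel
      (FreeAlgebra.ι k (Sum.inl (Q.t a)) * FreeAlgebra.ι k (Sum.inr a))
      (FreeAlgebra.ι k (Sum.inr a))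
  | source_mul (a : Q.A) : PathRel
      (FreeAlgebra.ι k (Sum.inr a) * FreeAlgebra.ι k (Sum.inl (Q.s a)))
      (FreeAlgebra.ι k (Sum.inr a))

def PathAlg : Type := RingQuot (PathRel k Q)

instance : Ring (PathAlg k Q) := inferInstanceAs (Ring (RingQuot _))
instance : Algebra k (PathAlg k Q) := inferInstanceAs (Algebra k (RingQuot _))

def vtx (i : Q.V) : PathAlg k Q :=
  RingQuot.mkAlgHom k (PathRel k Q) (FreeAlgebra.ι k (Sum.inl i))

def arr (a : Q.A) : PathAlg k Q :=
  RingQuot.mkAlgHom k (PathRel k Q) (FreeAlgebra.ι k (Sum.inr a))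

def pathOf (l : List Q.A) : PathAlg k Q := (l.map (arr k Q)).prod

def Composable (l : List Q.A) : Prop := List.Chain' (fun a b => Q.s a = Q.t b) l

def IsCycle (l : List Q.A) : Prop :=
  l ≠ [] ∧ List.Chain' (fun a b => Q.s a = Q.t b) (l ++ l.take 1)

def IsPathFrom (l : List Q.A) (i j : Q.V) : Prop :=
  Composable Q l ∧ (l = [] → i = j) ∧
    (∀ h : l ≠ [], Q.t (l.head h) = j) ∧ (∀ h : l ≠ [], Q.s (l.getLast h) = i)

def cycDeriv (l : List Q.A) (a : Q.A) : PathAlg k Q :=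
  ∑ i ∈ Finset.range l.length,
    if (l.rotate i).head? = some a then pathOf k Q (l.rotate i).tail else 0

abbrev Potential := List (k × List Q.A)

def Potential.deriv (W : Potential k Q) (a : Q.A) : PathAlg k Q :=
  (W.map fun p => p.1 • cycDeriv k Q p.2 a).sum

def Potential.elem (W : Potential k Q) : PathAlg k Q :=
  (W.map fun p => p.1 • pathOf k Q p.2).sum

inductive JacRel (W : Potential k Q) : PathAlg k Q → PathAlg k Q → Prop
  | deriv (a : Q.A) : JacRel W (Potential.deriv k Q W a) 0

def Jac (W : Potential k Q) : Type := RingQuot (JacRel k Q W)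

instance (W : Potential k Q) : Ring (Jac k Q W) := inferInstanceAs (Ring (RingQuot _))
instance (W : Potential k Q) : Algebra k (Jac k Q W) := inferInstanceAs (Algebra k (RingQuot _))

def jacMk (W : Potential k Q) : PathAlg k Q →ₐ[k] Jac k Q W :=
  RingQuot.mkAlgHom k (JacRel k Q W)

def Potential.memIdeal (W : Potential k Q) (x : PathAlg k Q) : Prop :=
  jacMk k Q W x = 0

def loc (S : Set Q.A) : Quiv where
  V := Q.V
  A := Q.A ⊕ ↥S
  s := Sum.elim Q.s fun a => Q.t a.1
  t := Sum.elim Q.t fun a => Q.s a.1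

inductive LocRel (S : Set Q.A) : PathAlg k (Q.loc S) → PathAlg k (Q.loc S) → Prop
  | inv_mul (a : ↥S) : LocRel S
      (arr k (Q.loc S) (Sum.inr a) * arr k (Q.loc S) (Sum.inl a.1))
      (vtx k (Q.loc S) (Q.s a.1))
  | mul_inv (a : ↥S) : LocRel S
      (arr k (Q.loc S) (Sum.inl a.1) * arr k (Q.loc S) (Sum.inr a))
      (vtx k (Q.loc S) (Q.t a.1))

def LocAlg (S : Set Q.A) : Type := RingQuot (LocRel k Q S)

instance (S : Set Q.A) : Ring (LocAlg k Q S) := inferInstanceAs (Ring (RingQuot _))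
instance (S : Set Q.A) : Algebra k (LocAlg k Q S) := inferInstanceAs (Algebra k (RingQuot _))

def locMk (S : Set Q.A) : PathAlg k (Q.loc S) →ₐ[k] LocAlg k Q S :=
  RingQuot.mkAlgHom k (LocRel k Q S)

def locVtx (S : Set Q.A) (i : Q.V) : LocAlg k Q S := locMk k Q S (vtx k (Q.loc S) i)

def locArr (S : Set Q.A) (x : (Q.loc S).A) : LocAlg k Q S := locMk k Q S (arr k (Q.loc S) x)

def locProd (S : Set Q.A) (l : List (Q.loc S).A) : LocAlg k Q S :=
  locMk k Q S (pathOf k (Q.loc S) l)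

inductive JacLRel (S : Set Q.A) (W : Potential k (Q.loc S)) :
    LocAlg k Q S → LocAlg k Q S → Prop
  | deriv (x : (Q.loc S).A) : JacLRel S W (locMk k Q S (Potential.deriv k (Q.loc S) W x)) 0

def JacL (S : Set Q.A) (W : Potential k (Q.loc S)) : Type := RingQuot (JacLRel k Q S W)

instance (S : Set Q.A) (W : Potential k (Q.loc S)) : Ring (JacL k Q S W) :=
  inferInstanceAs (Ring (RingQuot _))
instance (S : Set Q.A) (W : Potential k (Q.loc S)) : Algebra k (JacL k Q S W) :=
  inferInstanceAs (Algebra k (RingQuot _))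

def jacLMk (S : Set Q.A) (W : Potential k (Q.loc S)) : LocAlg k Q S →ₐ[k] JacL k Q S W :=
  RingQuot.mkAlgHom k (JacLRel k Q S W)

def memIdealL (S : Set Q.A) (W : Potential k (Q.loc S)) (x : LocAlg k Q S) : Prop :=
  jacLMk k Q S W x = 0

def locWeight (S : Set Q.A) (w : Q.A → ℤ) : (Q.loc S).A → ℤ :=
  Sum.elim w fun a => - w a.1

def degPart (S : Set Q.A) (w : Q.A → ℤ) (d : ℤ) : Submodule k (LocAlg k Q S) :=
  Submodule.span k {x | (d = 0 ∧ ∃ i : Q.V, x = locVtx k Q S i) ∨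
    ∃ l : List (Q.loc S).A, (l.map (locWeight Q S w)).sum = d ∧ x = locProd k Q S l}

structure Tiling where
  TV : Type
  [finTV : Fintype TV]
  isWhite : TV → Bool
  whiteOf : Q.A → TV
  blackOf : Q.A → TV
  whiteOf_white : ∀ a, isWhite (whiteOf a) = true
  blackOf_black : ∀ a, isWhite (blackOf a) = false
  cyc : TV → List Q.A
  cyc_isCycle : ∀ v, IsCycle Q (cyc v)
  cyc_nodup : ∀ v, (cyc v).Nodup
  mem_cyc : ∀ v a, a ∈ cyc v ↔ whiteOf a = v ∨ blackOf a = v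

attribute [instance] Tiling.finTV

def Tiling.potential (T : Tiling Q) : Potential k Q :=
  (Finset.univ (α := T.TV)).toList.map fun v =>
    ((if T.isWhite v then (1 : k) else -1), T.cyc v)

structure Aut where
  onV : Q.V ≃ Q.V
  onA : Q.A ≃ Q.A
  s_comm : ∀ a, Q.s (onA a) = onV (Q.s a)
  t_comm : ∀ a, Q.t (onA a) = onV (Q.t a)

structure TAut (T : Tiling Q) extends Aut Q where
  onTV : T.TV ≃ T.TV
  white_comm : ∀ v, T.isWhite (onTV v) = T.isWhite v
  whiteOf_comm : ∀ a, T.whiteOf (onA a) = onTV (T.whiteOf a)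
  blackOf_comm : ∀ a, T.blackOf (onA a) = onTV (T.blackOf a)
  cyc_comm : ∀ v, ∃ m, T.cyc (onTV v) = ((T.cyc v).map onA).rotate m

def Aut.OrderDvd (g : Aut Q) (n : ℕ) : Prop :=
  (∀ i, (⇑g.onV)^[n] i = i) ∧ (∀ a, (⇑g.onA)^[n] a = a)

def Aut.FreeVertexOrbits (g : Aut Q) (n : ℕ) : Prop :=
  ∀ i : Q.V, ∀ m, 0 < m → m < n → (⇑g.onV)^[m] i ≠ i

structure OrbitChoice (g : Aut Q) where
  genArrow : Q.A → Q.A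
  genArrow_orbit : ∀ a, ∃ m, (⇑g.onA)^[m] (genArrow a) = a
  genArrow_comm : ∀ a, genArrow (g.onA a) = genArrow a
  genArrow_idem : ∀ a, genArrow (genArrow a) = genArrow a
  repV : Q.V → Q.V
  repV_orbit : ∀ i, ∃ m, (⇑g.onV)^[m] (repV i) = i
  repV_comm : ∀ i, repV (g.onV i) = repV i
  repV_idem : ∀ i, repV (repV i) = repV i

def sharp (g : Aut Q) (n : ℕ) (C : OrbitChoice Q g) : Quiv where
  V := Q.V
  A := {a : Q.A // C.genArrow a = a} ⊕ ({i : Q.V // C.repV i = i} × Fin (n - 1))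
  s := Sum.elim (fun a => Q.s a.1) fun p => (⇑g.onV)^[p.2.1] p.1.1
  t := Sum.elim (fun a => Q.t a.1) fun p => (⇑g.onV)^[p.2.1 + 1] p.1.1

def isoSet (g : Aut Q) (n : ℕ) (C : OrbitChoice Q g) : Set (sharp Q g n C).A :=
  Set.range Sum.inr

variable (g : Aut Q) (n : ℕ) (C : OrbitChoice Q g)

/-- An isomorphism arrow, viewed as an arrow of the localised quiver. -/
def isoArrLoc (y : {i : Q.V // C.repV i = i} × Fin (n - 1)) :
    ((sharp Q g n C).loc (isoSet Q g n C)).A :=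
  Sum.inl (Sum.inr y)

/-- The inverse of an isomorphism arrow, viewed as an arrow of the localised
quiver. -/
def isoInvLoc (y : {i : Q.V // C.repV i = i} × Fin (n - 1)) :
    ((sharp Q g n C).loc (isoSet Q g n C)).A :=
  Sum.inr ⟨Sum.inr y, ⟨y, rfl⟩⟩

/-- The chosen generating arrow of the orbit of `a`, viewed as an arrow of the
localised quiver. -/
def genLoc (a : Q.A) : ((sharp Q g n C).loc (isoSet Q g n C)).A :=
  Sum.inl (Sum.inl ⟨C.genArrow a, C.genArrow_idem a⟩)

/-- `l` consists solely of isomorphism arrows and their inverses. -/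
def IsIsoList (l : List ((sharp Q g n C).loc (isoSet Q g n C)).A) : Prop :=
  ∀ x ∈ l, (∃ y, x = isoArrLoc Q g n C y) ∨ (∃ y, x = isoInvLoc Q g n C y)

/-- A choice, for every arrow `a` of `Q`, of the connecting paths `p_a` (from
`t(a_j)` to `t(a)`) and `q_a` (from `s(a)` to `s(a_j)`) composed solely of
isomorphism arrows and their inverses, where `a_j` is the chosen generating
arrow of the orbit of `a`. -/
structure ConnData where
  P : Q.A → List ((sharp Q g n C).loc (isoSet Q g n C)).A
  Qc : Q.A → List ((sharp Q g n C).loc (isoSet Q g n C)).A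
  isoP : ∀ a, IsIsoList Q g n C (P a)
  isoQc : ∀ a, IsIsoList Q g n C (Qc a)
  endP : ∀ a, IsPathFrom ((sharp Q g n C).loc (isoSet Q g n C)) (P a)
      (Q.t (C.genArrow a)) (Q.t a)
  endQc : ∀ a, IsPathFrom ((sharp Q g n C).loc (isoSet Q g n C)) (Qc a)
      (Q.s a) (Q.s (C.genArrow a))

/-- The image of an arrow `a` of `Q` under `ξ`, as a list of arrows of the
localised quiver: `p_a ⧺ [a_j] ⧺ q_a`. -/
def xiArrList (cd : ConnData Q g n C) (a : Q.A) :
    List ((sharp Q g n C).loc (isoSet Q g n C)).A :=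
  cd.P a ++ [genLoc Q g n C a] ++ cd.Qc a

/-- The image of a path of `Q` under `ξ`, as a list of arrows of the localised
quiver. -/
def xiList (cd : ConnData Q g n C) (l : List Q.A) :
    List ((sharp Q g n C).loc (isoSet Q g n C)).A :=
  l.flatMap (xiArrList Q g n C cd)

/-- The specification of the algebra homomorphism
`ξ : kQ → kQ'`: it sends constant paths to constant paths, and the arrow `a`
to `p_a a_j q_a`. -/
def XiSpec (cd : ConnData Q g n C)
    (ξ : PathAlg k Q →ₐ[k] LocAlg k (sharp Q g n C) (isoSet Q g n C)) : Prop :=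
  (∀ i : Q.V, ξ (vtx k Q i) = locVtx k (sharp Q g n C) (isoSet Q g n C) i) ∧
  ∀ a : Q.A, ξ (arr k Q a) =
    locProd k (sharp Q g n C) (isoSet Q g n C) (xiArrList Q g n C cd a)

/-- The potential `W' = ξ(W)` on the localised quiver induced by the potential
of a brane tiling. -/
def inducedPotential (T : Tiling Q) (cd : ConnData Q g n C) :
    Potential k ((sharp Q g n C).loc (isoSet Q g n C)) :=
  (Finset.univ (α := T.TV)).toList.map fun v =>
    ((if T.isWhite v then (1 : k) else -1), xiList Q g n C cd (T.cyc v))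

/-- The degree of arrows of `Q^#`: isomorphism arrows have degree `1`, the
generating arrows degree `0` (their formal inverses then get degree `-1`). -/
def sharpWeight : (sharp Q g n C).A → ℤ := Sum.elim (fun _ => 0) fun _ => 1

/-- The rotation of a cycle `l` placing the arrow `a` at the end. -/
def rotTo (l : List Q.A) (a : Q.A) : List Q.A := l.rotate (l.idxOf a + 1)

end Quiv

namespace Quiv

variable (Q : Quiv) (g : Aut Q) (n : ℕ) (C : OrbitChoice Q g)

/-- The potential `W'` (presented as a list of cycles) contains the arrow `x`. -/
def PotContains (W : Potential ℂ ((sharp Q g n C).loc (isoSet Q g n C)))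
    (x : ((sharp Q g n C).loc (isoSet Q g n C)).A) : Prop :=
  ∃ p ∈ W, p.1 ≠ 0 ∧ x ∈ p.2

end Quiv

/-!
For a potential `W` made of cycles, `∑ₓ x · ∂W/∂x` and `∑ₓ ∂W/∂x · x` both equal the sum of all
rotations of the cycles of `W`, and this sum commutes with every vertex idempotent `e_v`. Cutting
down by `e_v` gives, at each vertex, `∑_{t x = v} x · ∂W/∂x = ∑_{s x = v} ∂W/∂x · x`.

In `ℂQ'` take `v = g^t(i)`, the source of `r_{i,t}`. Apart from generating arrows, whose terms lie
in the ideal `J` generated by the `∂W'/∂a`, the arrows at `v` are `r_{i,t}⁻¹` and `r_{i,t-1}` (into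
`v`) and `r_{i,t}` and `r_{i,t-1}⁻¹` (out of `v`): the vertex orbits are free, so no other
isomorphism arrow meets `v`. By induction on `t` the terms of `r_{i,t-1}^{±1}` lie in `J`, hence
`r_{i,t}⁻¹ · ∂W'/∂r_{i,t}⁻¹ ≡ ∂W'/∂r_{i,t} · r_{i,t}` modulo `J`. Since `W'` does not contain both
`r_{i,t}` and its inverse, one side vanishes, and cancelling the invertible arrow on the other side
puts the remaining derivative in `J`.
-/

section Algebra

theorem sub_mem_of_sum_eq_sum {ι M S : Type*} [Fintype ι] [DecidableEq ι] [AddCommGroup M]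
    [SetLike S M] [AddSubgroupClass S M] {J : S} {f g : ι → M} (h : ∑ i, f i = ∑ i, g i)
    {i₀ i₁ : ι} (hf : ∀ i ≠ i₀, f i ∈ J) (hg : ∀ i ≠ i₁, g i ∈ J) : f i₀ - g i₁ ∈ J := by
  rw [← Finset.add_sum_erase _ f (Finset.mem_univ i₀),
    ← Finset.add_sum_erase _ g (Finset.mem_univ i₁)] at h
  have hdiff :
      f i₀ - g i₁ = ∑ i ∈ Finset.univ.erase i₁, g i - ∑ i ∈ Finset.univ.erase i₀, f i := by
    rw [sub_eq_sub_iff_add_eq_add, h, add_comm]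
  rw [hdiff]
  exact sub_mem (sum_mem fun i hi => hg i (Finset.ne_of_mem_erase hi))
    (sum_mem fun i hi => hf i (Finset.ne_of_mem_erase hi))

variable {k A : Type*} [CommSemiring k] [Semiring A] [Algebra k A] {s : Set A}

theorem Submodule.mul_mem_span_left (hs : ∀ c, ∀ z ∈ s, c * z ∈ s) (c : A) {x : A}
    (hx : x ∈ Submodule.span k s) : c * x ∈ Submodule.span k s :=
  (Submodule.span_le.2 fun z hz => Submodule.subset_span (hs c z hz) :
    Submodule.span k s ≤ (Submodule.span k s).comap (LinearMap.mulLeft k c)) hx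

theorem Submodule.mul_mem_span_right (hs : ∀ c, ∀ z ∈ s, z * c ∈ s) (c : A) {x : A}
    (hx : x ∈ Submodule.span k s) : x * c ∈ Submodule.span k s :=
  (Submodule.span_le.2 fun z hz => Submodule.subset_span (hs c z hz) :
    Submodule.span k s ≤ (Submodule.span k s).comap (LinearMap.mulRight k c)) hx

end Algebra

namespace Quiv

section PathAlgebra

variable {k : Type} [CommRing k] {Q : Quiv}

theorem vtx_mul_vtx (i j : Q.V) :
    vtx k Q i * vtx k Q j = if i = j then vtx k Q i else 0 := by
  have h := RingQuot.mkAlgHom_rel k (PathRel.vertex_mul (k := k) (Q := Q) i j)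
  rwa [map_mul, apply_ite (RingQuot.mkAlgHom k (PathRel k Q)), map_zero] at h

theorem vtx_mul_arr_self (a : Q.A) : vtx k Q (Q.t a) * arr k Q a = arr k Q a := by
  have h := RingQuot.mkAlgHom_rel k (PathRel.target_mul (k := k) (Q := Q) a)
  rwa [map_mul] at h

theorem arr_mul_vtx_self (a : Q.A) : arr k Q a * vtx k Q (Q.s a) = arr k Q a := by
  have h := RingQuot.mkAlgHom_rel k (PathRel.source_mul (k := k) (Q := Q) a)
  rwa [map_mul] at h

theorem vtx_mul_arr (v : Q.V) (a : Q.A) :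
    vtx k Q v * arr k Q a = if Q.t a = v then arr k Q a else 0 := by
  split_ifs with h
  · rw [← h, vtx_mul_arr_self]
  · rw [← vtx_mul_arr_self, ← mul_assoc, vtx_mul_vtx, if_neg (Ne.symm h), zero_mul]

theorem arr_mul_vtx (a : Q.A) (v : Q.V) :
    arr k Q a * vtx k Q v = if Q.s a = v then arr k Q a else 0 := by
  split_ifs with h
  · rw [← h, arr_mul_vtx_self]
  · rw [← arr_mul_vtx_self, mul_assoc, vtx_mul_vtx, if_neg h, mul_zero]

theorem pathOf_cons (a : Q.A) (l : List Q.A) :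
    pathOf k Q (a :: l) = arr k Q a * pathOf k Q l := by
  simp [pathOf]

theorem pathOf_concat (l : List Q.A) (a : Q.A) :
    pathOf k Q (l ++ [a]) = pathOf k Q l * arr k Q a := by
  simp [pathOf]

theorem vtx_mul_pathOf {l : List Q.A} (hl : l ≠ []) (v : Q.V) :
    vtx k Q v * pathOf k Q l = if Q.t (l.head hl) = v then pathOf k Q l else 0 := by
  obtain ⟨a, l, rfl⟩ := List.exists_cons_of_ne_nil hl
  rw [pathOf_cons, ← mul_assoc, vtx_mul_arr, List.head_cons]
  split_ifs <;> simp

theorem pathOf_mul_vtx {l : List Q.A} (hl : l ≠ []) (v : Q.V) :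
    pathOf k Q l * vtx k Q v = if Q.s (l.getLast hl) = v then pathOf k Q l else 0 := by
  obtain ⟨l, a, rfl⟩ := (List.eq_nil_or_concat' l).resolve_left hl
  rw [pathOf_concat, mul_assoc, arr_mul_vtx, List.getLast_concat]
  split_ifs <;> simp

end PathAlgebra

section Cycles

variable {Q : Quiv}

theorem isCycle_iff_chain {l : List Q.A} :
    IsCycle Q l ↔ l ≠ [] ∧ Cycle.Chain (fun a b => Q.s a = Q.t b) (l : Cycle Q.A) := by
  cases l with
  | nil => simp [IsCycle]
  | cons a l => rfl

theorem isCycle_iff_isChain_getLast_cons {l : List Q.A} (hl : l ≠ []) :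
    IsCycle Q l ↔ List.IsChain (fun a b => Q.s a = Q.t b) (l.getLast hl :: l) := by
  rw [isCycle_iff_chain, Cycle.chain_ne_nil _ hl, and_iff_right hl]

theorem IsCycle.rotate {l : List Q.A} (h : IsCycle Q l) (m : ℕ) : IsCycle Q (l.rotate m) := by
  rw [isCycle_iff_chain] at h ⊢
  rw [Cycle.coe_eq_coe.2 (List.IsRotated.forall l m)]
  exact ⟨fun h' => h.1 (List.rotate_eq_nil_iff.1 h'), h.2⟩

theorem IsCycle.composable {l : List Q.A} (h : IsCycle Q l) : Composable Q l :=
  ((isCycle_iff_isChain_getLast_cons h.1).1 h).tail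

theorem IsCycle.source_getLast {l : List Q.A} (h : IsCycle Q l) :
    Q.s (l.getLast h.1) = Q.t (l.head h.1) := by
  have := (isCycle_iff_isChain_getLast_cons h.1).1 h
  obtain ⟨a, l, rfl⟩ := List.exists_cons_of_ne_nil h.1
  exact (List.isChain_cons_cons.1 this).1

theorem IsCycle.vtx_mul_pathOf_comm {k : Type} [CommRing k] {l : List Q.A} (h : IsCycle Q l)
    (v : Q.V) : vtx k Q v * pathOf k Q l = pathOf k Q l * vtx k Q v := by
  rw [vtx_mul_pathOf h.1, pathOf_mul_vtx h.1, h.source_getLast]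

end Cycles

section CyclicDerivative

variable {k : Type} [CommRing k] {Q : Quiv}

theorem cycDeriv_eq_zero_of_notMem {l : List Q.A} {a : Q.A} (h : a ∉ l) :
    cycDeriv k Q l a = 0 :=
  Finset.sum_eq_zero fun _ _ =>
    if_neg fun hhead => h (List.mem_rotate.1 (List.mem_of_mem_head? hhead))

theorem exists_rotate_eq_cons {l : List Q.A} {i : ℕ} (hi : i ∈ Finset.range l.length) :
    ∃ b r, l.rotate i = b :: r :=
  List.exists_cons_of_ne_nil fun h => by
    simp [List.rotate_eq_nil_iff.1 h] at hi

theorem sum_pathOf_rotate_succ (l : List Q.A) :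
    ∑ i ∈ Finset.range l.length, pathOf k Q (l.rotate (i + 1)) =
      ∑ i ∈ Finset.range l.length, pathOf k Q (l.rotate i) := by
  have h := (Finset.sum_range_succ' (fun i => pathOf k Q (l.rotate i)) l.length).symm.trans
    (Finset.sum_range_succ _ _)
  rwa [List.rotate_length, List.rotate_zero, add_left_inj] at h

theorem sum_arr_mul_cycDeriv (l : List Q.A) :
    ∑ x, arr k Q x * cycDeriv k Q l x = ∑ i ∈ Finset.range l.length, pathOf k Q (l.rotate i) := by
  simp only [cycDeriv, Finset.mul_sum, mul_ite, mul_zero]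
  rw [Finset.sum_comm]
  refine Finset.sum_congr rfl fun i hi => ?_
  obtain ⟨b, r, hr⟩ := exists_rotate_eq_cons hi
  simp [hr, pathOf_cons]

theorem sum_cycDeriv_mul_arr (l : List Q.A) :
    ∑ x, cycDeriv k Q l x * arr k Q x = ∑ i ∈ Finset.range l.length, pathOf k Q (l.rotate i) := by
  simp only [cycDeriv, Finset.sum_mul, ite_mul, zero_mul]
  rw [Finset.sum_comm, ← sum_pathOf_rotate_succ]
  refine Finset.sum_congr rfl fun i hi => ?_
  obtain ⟨b, r, hr⟩ := exists_rotate_eq_cons hi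
  rw [← List.rotate_rotate, hr]
  simp [pathOf_concat]

theorem IsCycle.vtx_mul_sum_arr_mul_cycDeriv {l : List Q.A} (h : IsCycle Q l) (v : Q.V) :
    vtx k Q v * ∑ x, arr k Q x * cycDeriv k Q l x =
      (∑ x, cycDeriv k Q l x * arr k Q x) * vtx k Q v := by
  rw [sum_arr_mul_cycDeriv, sum_cycDeriv_mul_arr, Finset.mul_sum, Finset.sum_mul]
  exact Finset.sum_congr rfl fun i _ => (h.rotate i).vtx_mul_pathOf_comm v

theorem IsCycle.source_getLast_of_cons {a : Q.A} {r : List Q.A} (h : IsCycle Q (a :: r))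
    (hr : r ≠ []) : Q.s (r.getLast hr) = Q.t a := by
  simpa [List.getLast_cons hr] using h.source_getLast

theorem IsCycle.source_eq_target_head {a : Q.A} {r : List Q.A} (h : IsCycle Q (a :: r))
    (hr : r ≠ []) : Q.s a = Q.t (r.head hr) :=
  (List.isChain_cons.1 h.composable).1 _ (List.head?_eq_some_head hr)

theorem IsCycle.cycDeriv_mul_vtx {l : List Q.A} {a : Q.A} (h : IsCycle Q l) (hl : l ≠ [a]) :
    cycDeriv k Q l a * vtx k Q (Q.t a) = cycDeriv k Q l a := by
  simp only [cycDeriv, Finset.sum_mul, ite_mul, zero_mul]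
  refine Finset.sum_congr rfl fun i _ => ?_
  split_ifs with hhead
  · obtain ⟨r, hr⟩ := List.head?_eq_some_iff.1 hhead
    have hr0 : r ≠ [] := by rintro rfl; exact hl (List.rotate_eq_singleton_iff.1 hr)
    rw [hr, List.tail_cons, pathOf_mul_vtx hr0,
      if_pos ((hr ▸ h.rotate i).source_getLast_of_cons hr0)]
  · rfl

theorem IsCycle.vtx_mul_cycDeriv {l : List Q.A} {a : Q.A} (h : IsCycle Q l) (hl : l ≠ [a]) :
    vtx k Q (Q.s a) * cycDeriv k Q l a = cycDeriv k Q l a := by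
  simp only [cycDeriv, Finset.mul_sum, mul_ite, mul_zero]
  refine Finset.sum_congr rfl fun i _ => ?_
  split_ifs with hhead
  · obtain ⟨r, hr⟩ := List.head?_eq_some_iff.1 hhead
    have hr0 : r ≠ [] := by rintro rfl; exact hl (List.rotate_eq_singleton_iff.1 hr)
    rw [hr, List.tail_cons, vtx_mul_pathOf hr0,
      if_pos ((hr ▸ h.rotate i).source_eq_target_head hr0).symm]
  · rfl

theorem Potential.deriv_cons (p : k × List Q.A) (W : Potential k Q) (a : Q.A) :
    Potential.deriv k Q (p :: W) a = p.1 • cycDeriv k Q p.2 a + Potential.deriv k Q W a := by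
  simp [Potential.deriv]

theorem Potential.deriv_eq_zero {W : Potential k Q} {a : Q.A}
    (h : ∀ p ∈ W, p.1 ≠ 0 → a ∉ p.2) : Potential.deriv k Q W a = 0 := by
  induction W with
  | nil => rfl
  | cons p W ih =>
    rw [Potential.deriv_cons, ih fun q hq => h q (List.mem_cons_of_mem p hq), add_zero]
    by_cases hp : p.1 = 0
    · rw [hp, zero_smul]
    · rw [cycDeriv_eq_zero_of_notMem (h p List.mem_cons_self hp), smul_zero]

theorem Potential.vtx_mul_sum_arr_mul_deriv {W : Potential k Q} (hW : ∀ p ∈ W, IsCycle Q p.2)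
    (v : Q.V) :
    vtx k Q v * ∑ x, arr k Q x * Potential.deriv k Q W x =
      (∑ x, Potential.deriv k Q W x * arr k Q x) * vtx k Q v := by
  induction W with
  | nil => simp [Potential.deriv]
  | cons p W ih =>
    simp only [Potential.deriv_cons, mul_add, add_mul, Finset.sum_add_distrib, mul_smul_comm,
      smul_mul_assoc, ← Finset.smul_sum]
    rw [(hW p List.mem_cons_self).vtx_mul_sum_arr_mul_cycDeriv v,
      ih fun q hq => hW q (List.mem_cons_of_mem p hq)]

theorem Potential.deriv_mul_vtx {W : Potential k Q} {a : Q.A}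
    (hW : ∀ p ∈ W, IsCycle Q p.2 ∧ p.2 ≠ [a]) :
    Potential.deriv k Q W a * vtx k Q (Q.t a) = Potential.deriv k Q W a := by
  induction W with
  | nil => simp [Potential.deriv]
  | cons p W ih =>
    obtain ⟨hc, hne⟩ := hW p List.mem_cons_self
    rw [Potential.deriv_cons, add_mul, smul_mul_assoc, hc.cycDeriv_mul_vtx hne,
      ih fun q hq => hW q (List.mem_cons_of_mem p hq)]

theorem Potential.vtx_mul_deriv {W : Potential k Q} {a : Q.A}
    (hW : ∀ p ∈ W, IsCycle Q p.2 ∧ p.2 ≠ [a]) :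
    vtx k Q (Q.s a) * Potential.deriv k Q W a = Potential.deriv k Q W a := by
  induction W with
  | nil => simp [Potential.deriv]
  | cons p W ih =>
    obtain ⟨hc, hne⟩ := hW p List.mem_cons_self
    rw [Potential.deriv_cons, mul_add, mul_smul_comm, hc.vtx_mul_cycDeriv hne,
      ih fun q hq => hW q (List.mem_cons_of_mem p hq)]

end CyclicDerivative

section Paths

variable {Q R : Quiv}

theorem isPathFrom_singleton (x : Q.A) : IsPathFrom Q [x] (Q.s x) (Q.t x) :=
  ⟨List.isChain_singleton x, by simp, fun _ => rfl, fun _ => rfl⟩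

theorem IsPathFrom.append {l₁ l₂ : List Q.A} {i j m : Q.V} (h₁ : IsPathFrom Q l₁ j m)
    (h₂ : IsPathFrom Q l₂ i j) : IsPathFrom Q (l₁ ++ l₂) i m := by
  rcases eq_or_ne l₁ [] with rfl | hne₁
  · simpa [h₁.2.1 rfl] using h₂
  rcases eq_or_ne l₂ [] with rfl | hne₂
  · simpa [h₂.2.1 rfl] using h₁
  refine ⟨List.isChain_append.2 ⟨h₁.1, h₂.1, ?_⟩,
    fun h => absurd (List.append_eq_nil_iff.1 h).1 hne₁, fun _ => ?_, fun _ => ?_⟩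
  · intro a ha b hb
    rw [List.getLast?_eq_some_getLast hne₁, Option.mem_some_iff] at ha
    rw [List.head?_eq_some_head hne₂, Option.mem_some_iff] at hb
    rw [← ha, ← hb, h₁.2.2.2 hne₁, h₂.2.2.1 hne₂]
  · rw [List.head_append_left hne₁, h₁.2.2.1 hne₁]
  · rw [List.getLast_append_of_ne_nil _ hne₂, h₂.2.2.2 hne₂]

theorem isCycle_of_isPathFrom {l : List Q.A} (hl : l ≠ []) {v : Q.V} (h : IsPathFrom Q l v v) :
    IsCycle Q l := by
  rw [isCycle_iff_isChain_getLast_cons hl, List.isChain_cons]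
  refine ⟨fun b hb => ?_, h.1⟩
  rw [List.head?_eq_some_head hl, Option.mem_some_iff] at hb
  rw [← hb, h.2.2.2 hl, h.2.2.1 hl]

variable (φ : Q.V → R.V) {F : Q.A → List R.A}

theorem Composable.isPathFrom_flatMap (hF : ∀ a, IsPathFrom R (F a) (φ (Q.s a)) (φ (Q.t a)))
    {c : List Q.A} (hc : Composable Q c) (hne : c ≠ []) :
    IsPathFrom R (c.flatMap F) (φ (Q.s (c.getLast hne))) (φ (Q.t (c.head hne))) := by
  induction c with
  | nil => exact absurd rfl hne
  | cons a c ih =>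
    rcases eq_or_ne c [] with rfl | hc'
    · simpa using hF a
    · have hst : Q.s a = Q.t (c.head hc') :=
        (List.isChain_cons.1 hc).1 _ (List.head?_eq_some_head hc')
      rw [List.flatMap_cons, List.getLast_cons hc']
      exact (hF a).append (hst ▸ ih hc.tail hc')

theorem IsCycle.flatMap (hF : ∀ a, IsPathFrom R (F a) (φ (Q.s a)) (φ (Q.t a)))
    (hFne : ∀ a, F a ≠ []) {c : List Q.A} (hc : IsCycle Q c) : IsCycle R (c.flatMap F) := by
  have hne : c.flatMap F ≠ [] := by
    obtain ⟨a, c, rfl⟩ := List.exists_cons_of_ne_nil hc.1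
    simp [hFne a]
  have hpath := hc.composable.isPathFrom_flatMap φ hF hc.1
  rw [hc.source_getLast] at hpath
  exact isCycle_of_isPathFrom hne hpath

end Paths

section Localisation

variable {k : Type} [CommRing k] {R : Quiv} {S : Set R.A}

def locDeriv (W : Potential k (R.loc S)) (x : (R.loc S).A) : LocAlg k R S :=
  locMk k R S (Potential.deriv k (R.loc S) W x)

theorem locArr_mul_locArr_inv (a : S) :
    locArr k R S (Sum.inl a.1) * locArr k R S (Sum.inr a) = locVtx k R S (R.t a.1) := by
  unfold locArr
  rw [← map_mul]
  exact RingQuot.mkAlgHom_rel k (LocRel.mul_inv a)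

theorem locDeriv_eq_mul_arr_mul_inv {W : Potential k (R.loc S)} (a : S)
    (hW : ∀ p ∈ W, IsCycle _ p.2 ∧ p.2 ≠ [Sum.inl a.1]) :
    locDeriv W (Sum.inl a.1) =
      locDeriv W (Sum.inl a.1) * locArr k R S (Sum.inl a.1) * locArr k R S (Sum.inr a) := by
  rw [mul_assoc, locArr_mul_locArr_inv]
  unfold locDeriv locVtx
  rw [← map_mul]
  exact congrArg _ (Potential.deriv_mul_vtx hW).symm

theorem locDeriv_inv_eq_arr_mul_inv_mul {W : Potential k (R.loc S)} (a : S)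
    (hW : ∀ p ∈ W, IsCycle _ p.2 ∧ p.2 ≠ [Sum.inr a]) :
    locDeriv W (Sum.inr a) =
      locArr k R S (Sum.inl a.1) * (locArr k R S (Sum.inr a) * locDeriv W (Sum.inr a)) := by
  rw [← mul_assoc, locArr_mul_locArr_inv]
  unfold locDeriv locVtx
  rw [← map_mul]
  exact congrArg _ (Potential.vtx_mul_deriv hW).symm

-- The vertex identity at `v`, read modulo `J`.
theorem locArr_mul_locDeriv_sub_mem {W : Potential k (R.loc S)} (hW : ∀ p ∈ W, IsCycle _ p.2)
    {J : Submodule k (LocAlg k R S)} {v : (R.loc S).V} {x₀ x₁ : (R.loc S).A}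
    (h₀ : (R.loc S).t x₀ = v) (h₁ : (R.loc S).s x₁ = v)
    (hJ₀ : ∀ x ≠ x₀, (R.loc S).t x = v → locArr k R S x * locDeriv W x ∈ J)
    (hJ₁ : ∀ x ≠ x₁, (R.loc S).s x = v → locDeriv W x * locArr k R S x ∈ J) :
    locArr k R S x₀ * locDeriv W x₀ - locDeriv W x₁ * locArr k R S x₁ ∈ J := by
  have hsum : ∑ x, locMk k R S (vtx k (R.loc S) v * arr k (R.loc S) x) * locDeriv W x =
      ∑ x, locDeriv W x * locMk k R S (arr k (R.loc S) x * vtx k (R.loc S) v) := by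
    have h := congrArg (locMk k R S) (Potential.vtx_mul_sum_arr_mul_deriv hW v)
    simpa only [locDeriv, Finset.mul_sum, Finset.sum_mul, mul_assoc, map_sum, map_mul] using h
  have key := sub_mem_of_sum_eq_sum (J := J) hsum (i₀ := x₀) (i₁ := x₁) ?_ ?_
  · rwa [vtx_mul_arr, if_pos h₀, arr_mul_vtx, if_pos h₁] at key
  · intro x hx
    rw [vtx_mul_arr]
    split_ifs with ht
    · exact hJ₀ x hx ht
    · rw [map_zero, zero_mul]
      exact zero_mem J
  · intro x hx
    rw [arr_mul_vtx]
    split_ifs with hs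
    · exact hJ₁ x hx hs
    · rw [map_zero, mul_zero]
      exact zero_mem J

end Localisation

section Orbits

variable {Q : Quiv} {g : Aut Q} {n : ℕ}

theorem OrbitChoice.repV_iterate (C : OrbitChoice Q g) (i : Q.V) (m : ℕ) :
    C.repV ((⇑g.onV)^[m] i) = C.repV i := by
  induction m with
  | zero => rfl
  | succ m ih => rw [Function.iterate_succ_apply', C.repV_comm, ih]

theorem Aut.FreeVertexOrbits.eq_of_iterate_eq (hfree : Aut.FreeVertexOrbits Q g n) {i : Q.V}
    {m m' : ℕ} (hm : m < n) (hm' : m' < n) (h : (⇑g.onV)^[m] i = (⇑g.onV)^[m'] i) : m = m' := by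
  wlog hle : m ≤ m' generalizing m m'
  · exact (this hm' hm h.symm (le_of_not_ge hle)).symm
  by_contra hne
  have hfix : (⇑g.onV)^[m] ((⇑g.onV)^[m' - m] i) = (⇑g.onV)^[m] i := by
    rw [← Function.iterate_add_apply, Nat.add_sub_cancel' hle, h]
  exact hfree i (m' - m) (by omega) (by omega) (g.onV.injective.iterate m hfix)

theorem Aut.FreeVertexOrbits.eq_of_iterate_rep_eq (hfree : Aut.FreeVertexOrbits Q g n)
    {C : OrbitChoice Q g} {i i' : {i : Q.V // C.repV i = i}} {m m' : ℕ} (hm : m < n)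
    (hm' : m' < n) (h : (⇑g.onV)^[m] i.1 = (⇑g.onV)^[m'] i'.1) : i = i' ∧ m = m' := by
  have hii : i = i' := Subtype.ext <| by
    simpa only [C.repV_iterate, i.2, i'.2] using congrArg C.repV h
  subst hii
  exact ⟨rfl, hfree.eq_of_iterate_eq hm hm' h⟩

end Orbits

section IsoRelations

variable {k : Type} [CommRing k] {Q : Quiv} {g : Aut Q} {n : ℕ} {C : OrbitChoice Q g}
  (W : Potential k ((sharp Q g n C).loc (isoSet Q g n C)))

def genRelIdeal : Submodule k (LocAlg k (sharp Q g n C) (isoSet Q g n C)) :=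
  Submodule.span k {z | ∃ p, ∃ q, ∃ a : Q.A, C.genArrow a = a ∧
    z = p * locDeriv W (genLoc Q g n C a) * q}

variable {W}

theorem mul_mem_left_genRelIdeal (c : LocAlg k (sharp Q g n C) (isoSet Q g n C))
    {z : LocAlg k (sharp Q g n C) (isoSet Q g n C)} (hz : z ∈ genRelIdeal W) :
    c * z ∈ genRelIdeal W :=
  Submodule.mul_mem_span_left (by
    rintro c _ ⟨p, q, a, ha, rfl⟩
    exact ⟨c * p, q, a, ha, by rw [mul_assoc, mul_assoc, mul_assoc]⟩) c hz

theorem mul_mem_right_genRelIdeal (c : LocAlg k (sharp Q g n C) (isoSet Q g n C))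
    {z : LocAlg k (sharp Q g n C) (isoSet Q g n C)} (hz : z ∈ genRelIdeal W) :
    z * c ∈ genRelIdeal W :=
  Submodule.mul_mem_span_right (by
    rintro c _ ⟨p, q, a, ha, rfl⟩
    exact ⟨p, q * c, a, ha, by rw [mul_assoc _ q]⟩) c hz

theorem locDeriv_gen_mem_genRelIdeal (b : {a : Q.A // C.genArrow a = a}) :
    locDeriv W (Sum.inl (Sum.inl b)) ∈ genRelIdeal W :=
  Submodule.subset_span ⟨1, 1, b.1, b.2, by
    rw [one_mul, mul_one, genLoc]
    congr
    exact Subtype.ext b.2.symm⟩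

theorem iso_eq_of_source_eq (hfree : Aut.FreeVertexOrbits Q g n)
    {y y' : {i : Q.V // C.repV i = i} × Fin (n - 1)}
    (h : (sharp Q g n C).s (Sum.inr y') = (sharp Q g n C).s (Sum.inr y)) : y' = y := by
  obtain ⟨h1, h2⟩ := hfree.eq_of_iterate_rep_eq (by omega) (by omega) h
  exact Prod.ext h1 (Fin.ext h2)

theorem iso_lt_of_target_eq_source (hfree : Aut.FreeVertexOrbits Q g n)
    {y y' : {i : Q.V // C.repV i = i} × Fin (n - 1)}
    (h : (sharp Q g n C).t (Sum.inr y') = (sharp Q g n C).s (Sum.inr y)) :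
    (y'.2 : ℕ) < y.2 := by
  have := (hfree.eq_of_iterate_rep_eq (by omega) (by omega) h).2
  omega

theorem arr_inv_mul_locDeriv_sub_mem_genRelIdeal (hfree : Aut.FreeVertexOrbits Q g n)
    (hW : ∀ p ∈ W, IsCycle _ p.2) (y : {i : Q.V // C.repV i = i} × Fin (n - 1))
    (ih : ∀ y' : {i : Q.V // C.repV i = i} × Fin (n - 1), (y'.2 : ℕ) < y.2 →
      locDeriv W (isoArrLoc Q g n C y') ∈ genRelIdeal W ∧
        locDeriv W (isoInvLoc Q g n C y') ∈ genRelIdeal W) :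
    locArr k _ _ (isoInvLoc Q g n C y) * locDeriv W (isoInvLoc Q g n C y) -
      locDeriv W (isoArrLoc Q g n C y) * locArr k _ _ (isoArrLoc Q g n C y) ∈ genRelIdeal W := by
  refine locArr_mul_locDeriv_sub_mem hW rfl rfl ?_ ?_
  · rintro ((b | y') | ⟨_, y', rfl⟩) hx ht
    · exact mul_mem_left_genRelIdeal _ (locDeriv_gen_mem_genRelIdeal b)
    · exact mul_mem_left_genRelIdeal _ (ih y' (iso_lt_of_target_eq_source hfree ht)).1
    · exact (hx (congrArg (isoInvLoc Q g n C) (iso_eq_of_source_eq hfree ht))).elim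
  · rintro ((b | y') | ⟨_, y', rfl⟩) hx hs
    · exact mul_mem_right_genRelIdeal _ (locDeriv_gen_mem_genRelIdeal b)
    · exact (hx (congrArg (isoArrLoc Q g n C) (iso_eq_of_source_eq hfree hs))).elim
    · exact mul_mem_right_genRelIdeal _ (ih y' (iso_lt_of_target_eq_source hfree hs)).2

theorem locDeriv_iso_mem_genRelIdeal (hfree : Aut.FreeVertexOrbits Q g n)
    (hW : ∀ p ∈ W, IsCycle _ p.2) (hgen : ∀ p ∈ W, ∃ a, genLoc Q g n C a ∈ p.2)
    (hzero : ∀ y, locDeriv W (isoArrLoc Q g n C y) = 0 ∨ locDeriv W (isoInvLoc Q g n C y) = 0)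
    (y : {i : Q.V // C.repV i = i} × Fin (n - 1)) :
    locDeriv W (isoArrLoc Q g n C y) ∈ genRelIdeal W ∧
      locDeriv W (isoInvLoc Q g n C y) ∈ genRelIdeal W := by
  induction hm : (y.2 : ℕ) using Nat.strong_induction_on generalizing y with
  | _ m ih =>
  have hrel := arr_inv_mul_locDeriv_sub_mem_genRelIdeal hfree hW y
    fun y' hy' => ih _ (hm ▸ hy') y' rfl
  have hW_ne (x) (hx : ∀ a, x ≠ genLoc Q g n C a) : ∀ p ∈ W, IsCycle _ p.2 ∧ p.2 ≠ [x] :=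
    fun p hp => ⟨hW p hp, fun h => by
      obtain ⟨a, ha⟩ := hgen p hp
      exact hx a (List.mem_singleton.1 (h ▸ ha)).symm⟩
  rcases hzero y with h | h
  · rw [h, zero_mul, sub_zero] at hrel
    refine ⟨h ▸ zero_mem _, ?_⟩
    have hinv : locDeriv W (isoInvLoc Q g n C y) = _ :=
      locDeriv_inv_eq_arr_mul_inv_mul (⟨_, y, rfl⟩ : isoSet Q g n C)
        (hW_ne _ fun _ => Sum.inr_ne_inl)
    rw [hinv]
    exact mul_mem_left_genRelIdeal _ hrel
  · rw [h, mul_zero, zero_sub, neg_mem_iff] at hrel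
    refine ⟨?_, h ▸ zero_mem _⟩
    have harr : locDeriv W (isoArrLoc Q g n C y) = _ :=
      locDeriv_eq_mul_arr_mul_inv (⟨_, y, rfl⟩ : isoSet Q g n C)
        (hW_ne _ fun _ h => Sum.inr_ne_inl (Sum.inl_injective h))
    rw [harr]
    exact mul_mem_right_genRelIdeal _ hrel

end IsoRelations

section InducedPotential

variable {k : Type} [CommRing k] {Q : Quiv} {g : Aut Q} {n : ℕ} {C : OrbitChoice Q g}
  (cd : ConnData Q g n C) (T : Tiling Q)

theorem isPathFrom_xiArrList (a : Q.A) :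
    IsPathFrom _ (xiArrList Q g n C cd a) (Q.s a) (Q.t a) :=
  ((cd.endP a).append (isPathFrom_singleton _)).append (cd.endQc a)

theorem IsCycle.xiList {c : List Q.A} (hc : IsCycle Q c) : IsCycle _ (xiList Q g n C cd c) :=
  hc.flatMap (Q := Q) (R := (sharp Q g n C).loc (isoSet Q g n C)) id (isPathFrom_xiArrList cd)
    fun a => by simp [xiArrList]

theorem inducedPotential_isCycle :
    ∀ p ∈ inducedPotential k Q g n C T cd, IsCycle _ p.2 := by
  intro p hp
  obtain ⟨v, -, rfl⟩ := List.mem_map.1 hp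
  exact (T.cyc_isCycle v).xiList cd

theorem exists_genLoc_mem_of_mem_inducedPotential :
    ∀ p ∈ inducedPotential k Q g n C T cd, ∃ a, genLoc Q g n C a ∈ p.2 := by
  intro p hp
  obtain ⟨v, -, rfl⟩ := List.mem_map.1 hp
  obtain ⟨a, c, hc⟩ := List.exists_cons_of_ne_nil (T.cyc_isCycle v).1
  exact ⟨a, List.mem_flatMap.2 ⟨a, hc ▸ List.mem_cons_self, by simp [xiArrList]⟩⟩

theorem locDeriv_eq_zero_of_not_potContains
    {W : Potential ℂ ((sharp Q g n C).loc (isoSet Q g n C))}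
    {x : ((sharp Q g n C).loc (isoSet Q g n C)).A} (h : ¬ PotContains Q g n C W x) :
    locDeriv W x = 0 := by
  rw [locDeriv, Potential.deriv_eq_zero fun p hp h0 hx => h ⟨p, hp, h0, hx⟩, map_zero]

end InducedPotential

end Quiv

open Quiv in
theorem statement_8_general (Q : Quiv) (T : Quiv.Tiling Q) (g : Quiv.TAut Q T) (n : ℕ)
    (hfree : Quiv.Aut.FreeVertexOrbits Q g.toAut n)
    (C : Quiv.OrbitChoice Q g.toAut)
    (cd : Quiv.ConnData Q g.toAut n C)
    (hNoBoth : ∀ y : {i : Q.V // C.repV i = i} × Fin (n - 1),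
      ¬ (PotContains Q g.toAut n C (inducedPotential ℂ Q g.toAut n C T cd)
            (isoArrLoc Q g.toAut n C y) ∧
         PotContains Q g.toAut n C (inducedPotential ℂ Q g.toAut n C T cd)
            (isoInvLoc Q g.toAut n C y))) :
    ∀ y : {i : Q.V // C.repV i = i} × Fin (n - 1),
      locMk ℂ (sharp Q g.toAut n C) (isoSet Q g.toAut n C)
          (Potential.deriv ℂ ((sharp Q g.toAut n C).loc (isoSet Q g.toAut n C))
            (inducedPotential ℂ Q g.toAut n C T cd) (isoArrLoc Q g.toAut n C y)) ∈
        Submodule.span ℂ {z : LocAlg ℂ (sharp Q g.toAut n C) (isoSet Q g.toAut n C) |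
          ∃ p, ∃ q, ∃ a : Q.A, C.genArrow a = a ∧
            z = p * locMk ℂ (sharp Q g.toAut n C) (isoSet Q g.toAut n C)
                  (Potential.deriv ℂ ((sharp Q g.toAut n C).loc (isoSet Q g.toAut n C))
                    (inducedPotential ℂ Q g.toAut n C T cd) (genLoc Q g.toAut n C a)) * q} ∧
      locMk ℂ (sharp Q g.toAut n C) (isoSet Q g.toAut n C)
          (Potential.deriv ℂ ((sharp Q g.toAut n C).loc (isoSet Q g.toAut n C))
            (inducedPotential ℂ Q g.toAut n C T cd) (isoInvLoc Q g.toAut n C y)) ∈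
        Submodule.span ℂ {z : LocAlg ℂ (sharp Q g.toAut n C) (isoSet Q g.toAut n C) |
          ∃ p, ∃ q, ∃ a : Q.A, C.genArrow a = a ∧
            z = p * locMk ℂ (sharp Q g.toAut n C) (isoSet Q g.toAut n C)
                  (Potential.deriv ℂ ((sharp Q g.toAut n C).loc (isoSet Q g.toAut n C))
                    (inducedPotential ℂ Q g.toAut n C T cd) (genLoc Q g.toAut n C a)) * q} :=
  locDeriv_iso_mem_genRelIdeal hfree (inducedPotential_isCycle cd T)
    (exists_genLoc_mem_of_mem_inducedPotential cd T) fun y =>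
      (not_and_or.1 (hNoBoth y)).imp locDeriv_eq_zero_of_not_potContains
        locDeriv_eq_zero_of_not_potContains

open Quiv in
/-- The relations `∂W'/∂r_{i_u,t}` (resp. `∂W'/∂r_{i_u,t}⁻¹`)
lie in the two-sided ideal of `ℂQ'` generated by the relations `∂W'/∂a` for the
generating arrows `a`; i.e. each derivative of `W'` with respect to an
isomorphism arrow (or its inverse) is a sum of elements `p·(∂W'/∂a)·q`. -/
theorem statement_8 (Q : Quiv) (T : Quiv.Tiling Q) (g : Quiv.TAut Q T) (n : ℕ)
    (hn : 0 < n)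
    (horder : Quiv.Aut.OrderDvd Q g.toAut n)
    (horderTV : ∀ v, (⇑g.onTV)^[n] v = v)
    (hfree : Quiv.Aut.FreeVertexOrbits Q g.toAut n)
    (C : Quiv.OrbitChoice Q g.toAut)
    (cd : Quiv.ConnData Q g.toAut n C)
    (hNoBoth : ∀ y : {i : Q.V // C.repV i = i} × Fin (n - 1),
      ¬ (PotContains Q g.toAut n C (inducedPotential ℂ Q g.toAut n C T cd)
            (isoArrLoc Q g.toAut n C y) ∧
         PotContains Q g.toAut n C (inducedPotential ℂ Q g.toAut n C T cd)
            (isoInvLoc Q g.toAut n C y))) :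
    ∀ y : {i : Q.V // C.repV i = i} × Fin (n - 1),
      locMk ℂ (sharp Q g.toAut n C) (isoSet Q g.toAut n C)
          (Potential.deriv ℂ ((sharp Q g.toAut n C).loc (isoSet Q g.toAut n C))
            (inducedPotential ℂ Q g.toAut n C T cd) (isoArrLoc Q g.toAut n C y)) ∈
        Submodule.span ℂ {z : LocAlg ℂ (sharp Q g.toAut n C) (isoSet Q g.toAut n C) |
          ∃ p, ∃ q, ∃ a : Q.A, C.genArrow a = a ∧
            z = p * locMk ℂ (sharp Q g.toAut n C) (isoSet Q g.toAut n C)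
                  (Potential.deriv ℂ ((sharp Q g.toAut n C).loc (isoSet Q g.toAut n C))
                    (inducedPotential ℂ Q g.toAut n C T cd) (genLoc Q g.toAut n C a)) * q} ∧
      locMk ℂ (sharp Q g.toAut n C) (isoSet Q g.toAut n C)
          (Potential.deriv ℂ ((sharp Q g.toAut n C).loc (isoSet Q g.toAut n C))
            (inducedPotential ℂ Q g.toAut n C T cd) (isoInvLoc Q g.toAut n C y)) ∈
        Submodule.span ℂ {z : LocAlg ℂ (sharp Q g.toAut n C) (isoSet Q g.toAut n C) |
          ∃ p, ∃ q, ∃ a : Q.A, C.genArrow a = a ∧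
            z = p * locMk ℂ (sharp Q g.toAut n C) (isoSet Q g.toAut n C)
                  (Potential.deriv ℂ ((sharp Q g.toAut n C).loc (isoSet Q g.toAut n C))
                    (inducedPotential ℂ Q g.toAut n C T cd) (genLoc Q g.toAut n C a)) * q} :=
  statement_8_general Q T g n hfree C cd hNoBoth
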